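/- Let b ≥ 2 and let L be a field of characteristic zero. Suppose y is a nonzero Puiseux series over L and u := (M y)/y is a ramified rational function (i.e., u ∈ L(x^{1/q}) for some q ≥ 1), where M is the substitution x ↦ x^b. Write y = x^{m/q'} s(x^{1/q'}) with s ∈ L[[x]], s(0) = c ≠ 0, m ∈ ℤ, q' ≥ 1. Then g(x) := s(x^b)/s(x) is a rational function in L(x) with g(0) = 1, and s(x) = c·∏_{k≥0} 1/g(x^{b^k}) where the infinite product converges in the x-adic topology of L[[x]]. -/

import Mathlib

/-- `f(x^b)`: the power series obtained from `f` by substituting `x^b` for `x`. -/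
noncomputable def compPow {R : Type*} [Semiring R] (b : ℕ) (f : PowerSeries R) :
    PowerSeries R :=
  PowerSeries.mk fun n => if b ∣ n then PowerSeries.coeff (R := R) (n / b) f else 0

/-- Rescaling the exponents of a Hahn series in `L((x^ℚ))` by a positive rational `c`
(i.e. substituting `x^c` for `x`). -/
noncomputable def scaleHahn (L : Type*) [Field L] (c : ℚ) (hc : 0 < c) :
    HahnSeries ℚ L →+* HahnSeries ℚ L :=
  HahnSeries.embDomainRingHom (AddMonoidHom.mulLeft c)
    (fun x y h => by
      simpa [AddMonoidHom.coe_mulLeft] using mul_left_cancel₀ hc.ne' h)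
    (fun g g' => by
      simpa [AddMonoidHom.coe_mulLeft] using mul_le_mul_iff_right₀ hc)

/-- The Mahler operator `x ↦ x^b` on Hahn series with rational exponents. -/
noncomputable def mahlerHahn (L : Type*) [Field L] (b : ℕ) (hb : 0 < b) :
    HahnSeries ℚ L →+* HahnSeries ℚ L :=
  scaleHahn L (b : ℚ) (by positivity)

/-- The polynomial `p(x^{1/q})`, as a Hahn series with rational exponents. -/
noncomputable def polyToHahn (L : Type*) [Field L] (q : ℕ) (p : Polynomial L) :
    HahnSeries ℚ L :=
  ∑ n ∈ Finset.range (p.natDegree + 1), HahnSeries.single ((n : ℚ) / q) (p.coeff n)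

/-- The power series `s(x^{1/q})`, as a Hahn series with rational exponents. -/
noncomputable def psToHahn (L : Type*) [Field L] (q : ℕ) (hq : 0 < q)
    (s : PowerSeries L) : HahnSeries ℚ L :=
  scaleHahn L ((q : ℚ)⁻¹) (by positivity) (HahnSeries.ofPowerSeries ℚ L s)

/-!
Put every term of the Mahler relation over the common ramification index `D = q q'`: each one
becomes `x^r` times a power series in `x^{1/D}`, and after clearing the monomials one is left
with a polynomial relation `s(x^{bq}) · W = s(x^q) · V`, i.e. `g(x^q) = V / W` for
`g = s(x^b) / s(x)`. The `q`-th power of the root of `W` in `L[x]/(W)` is integral over `L`,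
so `W` divides `μ(x^q)` for some `μ ≠ 0`; then `(g μ)(x^q)` is a polynomial, hence so is
`g μ`. Normalising constant terms gives `g = A / B` with `A(0) = B(0) = 1`, and the product
telescopes: `s · ∏_{k<N} g(x^{b^k}) = s(x^{b^N}) ≡ c mod x^{b^N}`.
-/

open Polynomial (expand)

section compPow

theorem coeff_compPow {R : Type*} [Semiring R] (b n : ℕ) (f : PowerSeries R) :
    PowerSeries.coeff n (compPow b f) = if b ∣ n then PowerSeries.coeff (n / b) f else 0 :=
  PowerSeries.coeff_mk _ _

theorem constantCoeff_compPow {R : Type*} [Semiring R] (b : ℕ) (f : PowerSeries R) :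
    PowerSeries.constantCoeff (compPow b f) = PowerSeries.constantCoeff f := by
  rw [← PowerSeries.coeff_zero_eq_constantCoeff_apply, coeff_compPow, if_pos (dvd_zero b),
    Nat.zero_div, PowerSeries.coeff_zero_eq_constantCoeff_apply]

theorem coeff_compPow_of_lt {R : Type*} [Semiring R] {b n : ℕ} (hn : n < b) (f : PowerSeries R) :
    PowerSeries.coeff n (compPow b f) =
      PowerSeries.coeff n (PowerSeries.C (PowerSeries.constantCoeff f)) := by
  rw [coeff_compPow, PowerSeries.coeff_C]
  rcases Nat.eq_zero_or_pos n with rfl | hn0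
  · simp [PowerSeries.coeff_zero_eq_constantCoeff_apply]
  · rw [if_neg (Nat.not_dvd_of_pos_of_lt hn0 hn), if_neg hn0.ne']

variable {R : Type*} [CommRing R]

theorem compPow_eq_expand {b : ℕ} (hb : b ≠ 0) (f : PowerSeries R) :
    compPow b f = PowerSeries.expand b hb f := by
  ext n
  rw [coeff_compPow, PowerSeries.coeff_expand]

theorem compPow_mul {b : ℕ} (hb : b ≠ 0) (f g : PowerSeries R) :
    compPow b (f * g) = compPow b f * compPow b g := by
  simp only [compPow_eq_expand hb, map_mul]

theorem compPow_compPow {a b : ℕ} (ha : a ≠ 0) (hb : b ≠ 0) (f : PowerSeries R) :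
    compPow a (compPow b f) = compPow (a * b) f := by
  rw [compPow_eq_expand ha, compPow_eq_expand hb, compPow_eq_expand (mul_ne_zero ha hb),
    PowerSeries.expand_mul]

theorem compPow_one_left (f : PowerSeries R) : compPow 1 f = f := by
  rw [compPow_eq_expand one_ne_zero, PowerSeries.expand_one_apply]

theorem coe_expand {b : ℕ} (hb : 0 < b) (p : Polynomial R) :
    ((expand R b p : Polynomial R) : PowerSeries R) = compPow b p := by
  ext n
  rw [Polynomial.coeff_coe, Polynomial.coeff_expand hb, coeff_compPow]
  simp only [Polynomial.coeff_coe]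

theorem eq_coe_contract_of_compPow_eq {b : ℕ} (hb : 0 < b) {f : PowerSeries R}
    {p : Polynomial R} (h : compPow b f = p) : f = (p.contract b : Polynomial R) := by
  ext n
  rw [Polynomial.coeff_coe, Polynomial.coeff_contract hb.ne', ← Polynomial.coeff_coe, ← h,
    coeff_compPow, if_pos (dvd_mul_left _ _), Nat.mul_div_cancel _ hb]

end compPow

theorem mul_prod_compPow_eq {K : Type*} [Field K] {b : ℕ} (hb : b ≠ 0) {s : PowerSeries K}
    {A B : Polynomial K} (hB : B.coeff 0 ≠ 0) (h : compPow b s * B = A * s) (N : ℕ) :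
    s * ∏ k ∈ Finset.range N, compPow (b ^ k) ((A : PowerSeries K) * (B : PowerSeries K)⁻¹) =
      compPow (b ^ N) s := by
  have hstep : s * ((A : PowerSeries K) * (B : PowerSeries K)⁻¹) = compPow b s := by
    rw [← mul_assoc, mul_comm s, ← h, mul_assoc, PowerSeries.mul_inv_cancel, mul_one]
    rwa [← PowerSeries.coeff_zero_eq_constantCoeff_apply, Polynomial.coeff_coe]
  induction N with
  | zero => simp [compPow_one_left]
  | succ N ih =>
    rw [Finset.prod_range_succ, ← mul_assoc, ih, ← compPow_mul (pow_ne_zero N hb), hstep,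
      compPow_compPow (pow_ne_zero N hb) hb, ← pow_succ]

section Hahn

variable {L : Type*} [Field L]

theorem scaleHahn_coeff (c : ℚ) (hc : 0 < c) (x : HahnSeries ℚ L) (r : ℚ) :
    (scaleHahn L c hc x).coeff r = x.coeff (r / c) := by
  conv_lhs => rw [← mul_div_cancel₀ r hc.ne']
  exact HahnSeries.embDomain_coeff

theorem scaleHahn_injective (c : ℚ) (hc : 0 < c) : Function.Injective (scaleHahn L c hc) :=
  HahnSeries.embDomain_injective

theorem scaleHahn_scaleHahn (c d : ℚ) (hc : 0 < c) (hd : 0 < d) (x : HahnSeries ℚ L) :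
    scaleHahn L c hc (scaleHahn L d hd x) = scaleHahn L (c * d) (mul_pos hc hd) x := by
  ext r
  rw [scaleHahn_coeff, scaleHahn_coeff, scaleHahn_coeff, div_div]

theorem scaleHahn_congr {c d : ℚ} (hc : 0 < c) (hd : 0 < d) (h : c = d) (x : HahnSeries ℚ L) :
    scaleHahn L c hc x = scaleHahn L d hd x := by
  subst h; rfl

theorem scaleHahn_single (c : ℚ) (hc : 0 < c) (r : ℚ) (a : L) :
    scaleHahn L c hc (HahnSeries.single r a) = HahnSeries.single (c * r) a :=
  HahnSeries.embDomain_single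

theorem coeff_ofPowerSeries_of_notMem_range (f : PowerSeries L) {r : ℚ}
    (hr : r ∉ Set.range ((↑) : ℕ → ℚ)) : (HahnSeries.ofPowerSeries ℚ L f).coeff r = 0 :=
  HahnSeries.embDomain_of_notMem_range hr

theorem scaleHahn_ofPowerSeries {n : ℕ} (hn : 0 < n) (f : PowerSeries L) :
    scaleHahn L n (Nat.cast_pos.mpr hn) (HahnSeries.ofPowerSeries ℚ L f) =
      HahnSeries.ofPowerSeries ℚ L (compPow n f) := by
  have hn' : (n : ℚ) ≠ 0 := Nat.cast_ne_zero.mpr hn.ne'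
  ext r
  rw [scaleHahn_coeff]
  by_cases hr : r ∈ Set.range ((↑) : ℕ → ℚ)
  · obtain ⟨j, rfl⟩ := hr
    rw [HahnSeries.ofPowerSeries_apply_coeff, coeff_compPow]
    split_ifs with hdvd
    · obtain ⟨k, rfl⟩ := hdvd
      rw [Nat.mul_div_cancel_left _ hn, Nat.cast_mul, mul_div_cancel_left₀ _ hn',
        HahnSeries.ofPowerSeries_apply_coeff]
    · refine coeff_ofPowerSeries_of_notMem_range f fun ⟨k, hk⟩ => hdvd ⟨k, ?_⟩
      rw [eq_div_iff hn'] at hk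
      exact_mod_cast hk.symm.trans (mul_comm _ _)
  · rw [coeff_ofPowerSeries_of_notMem_range _ hr, coeff_ofPowerSeries_of_notMem_range]
    rintro ⟨k, hk⟩
    exact hr ⟨k * n, by rw [Nat.cast_mul, hk, div_mul_cancel₀ _ hn']⟩

end Hahn

section psToHahn

variable {L : Type*} [Field L]

theorem psToHahn_eq_comp (q : ℕ) (hq : 0 < q) :
    psToHahn L q hq = ⇑((scaleHahn L ((q : ℚ)⁻¹) (by positivity)).comp
      (HahnSeries.ofPowerSeries ℚ L)) :=
  rfl

theorem psToHahn_injective (q : ℕ) (hq : 0 < q) : Function.Injective (psToHahn L q hq) :=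
  (scaleHahn_injective _ _).comp HahnSeries.ofPowerSeries_injective

theorem psToHahn_mul (q : ℕ) (hq : 0 < q) (f g : PowerSeries L) :
    psToHahn L q hq (f * g) = psToHahn L q hq f * psToHahn L q hq g := by
  simp only [psToHahn, map_mul]

theorem psToHahn_X_pow (q : ℕ) (hq : 0 < q) (n : ℕ) :
    psToHahn L q hq (PowerSeries.X ^ n) = HahnSeries.single ((n : ℚ) / q) 1 := by
  rw [psToHahn, HahnSeries.ofPowerSeries_X_pow, scaleHahn_single, inv_mul_eq_div]

theorem psToHahn_compPow {k q n : ℕ} (hk : 0 < k) (hq : 0 < q) (hn : 0 < n) (h : k * q = n)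
    (f : PowerSeries L) : psToHahn L n hn (compPow k f) = psToHahn L q hq f := by
  subst h
  rw [psToHahn, ← scaleHahn_ofPowerSeries hk, scaleHahn_scaleHahn, psToHahn]
  exact scaleHahn_congr _ _ (by push_cast; field_simp) _

theorem mahlerHahn_single {b : ℕ} (hb : 0 < b) (r : ℚ) (a : L) :
    mahlerHahn L b hb (HahnSeries.single r a) = HahnSeries.single (b * r) a :=
  scaleHahn_single _ _ r a

theorem mahlerHahn_psToHahn {b : ℕ} (hb : 0 < b) (q : ℕ) (hq : 0 < q) (f : PowerSeries L) :
    mahlerHahn L b hb (psToHahn L q hq f) = psToHahn L q hq (compPow b f) := by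
  rw [mahlerHahn, psToHahn, scaleHahn_scaleHahn, psToHahn, ← scaleHahn_ofPowerSeries hb,
    scaleHahn_scaleHahn]
  exact scaleHahn_congr _ _ (mul_comm _ _) _

theorem polyToHahn_eq_psToHahn (q : ℕ) (hq : 0 < q) (p : Polynomial L) :
    polyToHahn L q p = psToHahn L q hq p := by
  conv_rhs => rw [p.as_sum_range_C_mul_X_pow]
  rw [polyToHahn, ← Polynomial.coeToPowerSeries.ringHom_apply, map_sum, psToHahn_eq_comp,
    map_sum]
  refine Finset.sum_congr rfl fun n _ => ?_
  rw [Polynomial.coeToPowerSeries.ringHom_apply, ← psToHahn_eq_comp q hq, Polynomial.coe_mul,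
    Polynomial.coe_C, Polynomial.coe_pow, Polynomial.coe_X, psToHahn_mul, psToHahn_X_pow, psToHahn,
    HahnSeries.ofPowerSeries_C, HahnSeries.C_apply, scaleHahn_single, mul_zero,
    HahnSeries.single_mul_single, zero_add, mul_one]

end psToHahn

section MahlerRelation

variable {L : Type*} [Field L]

theorem exists_X_pow_mul_eq_of_single_mul_eq {D : ℕ} (hD : 0 < D) {r r' : ℚ} (e : ℤ)
    (he : r - r' = e / D) {f g : PowerSeries L}
    (h : HahnSeries.single r 1 * psToHahn L D hD f = HahnSeries.single r' 1 * psToHahn L D hD g) :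
    ∃ a a' : ℕ, PowerSeries.X ^ a * f = PowerSeries.X ^ a' * g := by
  refine ⟨e.toNat, (-e).toNat, psToHahn_injective D hD ?_⟩
  have hexp : ((-e).toNat : ℚ) / D = (e.toNat : ℚ) / D - r + r' := by
    have hsplit : ((e.toNat : ℤ) : ℚ) - ((-e).toNat : ℤ) = e := by
      exact_mod_cast (by omega : (e.toNat : ℤ) - (-e).toNat = e)
    push_cast at hsplit
    rw [sub_add, he, ← hsplit, sub_div, sub_sub_cancel]
  rw [psToHahn_mul, psToHahn_mul, psToHahn_X_pow, psToHahn_X_pow]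
  calc HahnSeries.single ((e.toNat : ℚ) / D) (1 : L) * psToHahn L D hD f
      = HahnSeries.single ((e.toNat : ℚ) / D - r) 1 *
          (HahnSeries.single r 1 * psToHahn L D hD f) := by
        rw [← mul_assoc, HahnSeries.single_mul_single, sub_add_cancel, mul_one]
    _ = HahnSeries.single ((-e).toNat / D : ℚ) 1 * psToHahn L D hD g := by
        rw [h, ← mul_assoc, HahnSeries.single_mul_single, mul_one, hexp]

theorem exists_compPow_relation_of_mahlerHahn_relation {b q q' : ℕ} (hb : 0 < b) (hq : 0 < q)
    (hq' : 0 < q') (m : ℤ) (s : PowerSeries L) {A B : Polynomial L} (hB : B ≠ 0)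
    (h : mahlerHahn L b hb (HahnSeries.single ((m : ℚ) / q') 1 * psToHahn L q' hq' s) *
        polyToHahn L q B =
      HahnSeries.single ((m : ℚ) / q') 1 * psToHahn L q' hq' s * polyToHahn L q A) :
    ∃ W V : Polynomial L, W ≠ 0 ∧ compPow q (compPow b s) * W = compPow q s * V := by
  have hD : 0 < q * q' := Nat.mul_pos hq hq'
  have hS (f : PowerSeries L) : psToHahn L q' hq' f = psToHahn L (q * q') hD (compPow q f) :=
    (psToHahn_compPow hq hq' hD rfl f).symm
  have hP (p : Polynomial L) : polyToHahn L q p = psToHahn L (q * q') hD (compPow q' p) := by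
    rw [polyToHahn_eq_psToHahn q hq, psToHahn_compPow hq' hq hD (mul_comm _ _)]
  rw [map_mul, mahlerHahn_single, mahlerHahn_psToHahn, hS, hS, hP, hP,
    mul_assoc, mul_assoc, ← psToHahn_mul, ← psToHahn_mul] at h
  obtain ⟨a, a', hX⟩ := exists_X_pow_mul_eq_of_single_mul_eq hD (((b : ℤ) - 1) * m * q)
    (by push_cast; field_simp) h
  refine ⟨Polynomial.X ^ a * expand L q' B, Polynomial.X ^ a' * expand L q' A,
    mul_ne_zero (pow_ne_zero _ Polynomial.X_ne_zero) ((Polynomial.expand_ne_zero hq').mpr hB), ?_⟩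
  push_cast
  rw [coe_expand hq', coe_expand hq']
  linear_combination hX

end MahlerRelation

section Rationality

variable {K : Type*} [Field K]

theorem exists_expand_eq_mul (q : ℕ) {W : Polynomial K} (hW : W ≠ 0) :
    ∃ μ C : Polynomial K, μ ≠ 0 ∧ expand K q μ = W * C := by
  have := PowerBasis.finite (AdjoinRoot.powerBasis hW)
  obtain ⟨μ, hmonic, hμ⟩ := IsIntegral.of_finite K (AdjoinRoot.root W ^ q)
  obtain ⟨C, hC⟩ : W ∣ expand K q μ := by
    rw [← AdjoinRoot.mk_eq_zero, ← AdjoinRoot.aeval_eq, Polynomial.expand_aeval,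
      Polynomial.aeval_def, hμ]
  exact ⟨μ, C, hmonic.ne_zero, hC⟩

theorem exists_mul_eq_coe_of_mul_eq_coe {f : PowerSeries K} {μ P : Polynomial K} (hμ : μ ≠ 0)
    (h : f * μ = P) : ∃ μ₀ P₀ : Polynomial K, μ₀.coeff 0 ≠ 0 ∧ f * μ₀ = P₀ := by
  obtain ⟨μ₀, hμ₀, hX⟩ := μ.exists_eq_pow_rootMultiplicity_mul_and_not_dvd hμ 0
  set j := μ.rootMultiplicity 0
  rw [hμ₀] at h
  simp only [map_zero, sub_zero] at hX h
  have hdvd : Polynomial.X ^ j ∣ P := by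
    refine Polynomial.X_pow_dvd_iff.mpr fun d hd => ?_
    rw [← Polynomial.coeff_coe, ← h, Polynomial.coe_mul, Polynomial.coe_pow, Polynomial.coe_X,
      mul_left_comm, PowerSeries.coeff_X_pow_mul', if_neg (by omega)]
  obtain ⟨P₀, rfl⟩ := hdvd
  refine ⟨μ₀, P₀, fun h0 => hX (Polynomial.X_dvd_iff.mpr h0), ?_⟩
  apply mul_left_cancel₀ (pow_ne_zero j PowerSeries.X_ne_zero)
  push_cast at h
  linear_combination h

theorem exists_mul_eq_coe_of_compPow_mul_eq_coe {q : ℕ} (hq : 0 < q) {g : PowerSeries K}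
    {W V : Polynomial K} (hW : W ≠ 0) (h : compPow q g * W = V) :
    ∃ μ P : Polynomial K, μ.coeff 0 ≠ 0 ∧ g * μ = P := by
  obtain ⟨μ, C, hμ, hC⟩ := exists_expand_eq_mul q hW
  refine exists_mul_eq_coe_of_mul_eq_coe hμ (eq_coe_contract_of_compPow_eq (p := V * C) hq ?_)
  rw [compPow_mul hq.ne', ← coe_expand hq, hC, Polynomial.coe_mul, ← mul_assoc, h,
    Polynomial.coe_mul]

theorem exists_normalized_relation_of_compPow_relation {b q : ℕ} (hq : 0 < q)
    {s : PowerSeries K} (hs : PowerSeries.constantCoeff s ≠ 0) {W V : Polynomial K} (hW : W ≠ 0)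
    (h : compPow q (compPow b s) * W = compPow q s * V) :
    ∃ A B : Polynomial K, A.coeff 0 = 1 ∧ B.coeff 0 = 1 ∧ compPow b s * B = A * s := by
  have hinv : s⁻¹ * s = 1 := PowerSeries.inv_mul_cancel s hs
  have hg : compPow q (compPow b s * s⁻¹) * W = V := by
    have hinvq : compPow q s⁻¹ * compPow q s = 1 := by
      rw [← compPow_mul hq.ne', hinv, compPow_eq_expand hq.ne', map_one]
    rw [compPow_mul hq.ne']
    linear_combination compPow q s⁻¹ * h + (V : PowerSeries K) * hinvq
  obtain ⟨μ, P, hμ, hP⟩ := exists_mul_eq_coe_of_compPow_mul_eq_coe hq hW hg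
  have hrel : compPow b s * μ = P * s := by
    rw [← hP]
    linear_combination (-(compPow b s * μ)) * hinv
  have hP0 : P.coeff 0 = μ.coeff 0 := by
    have := congrArg PowerSeries.constantCoeff hrel
    rw [map_mul, map_mul, constantCoeff_compPow,
      ← PowerSeries.coeff_zero_eq_constantCoeff_apply (μ : PowerSeries K),
      ← PowerSeries.coeff_zero_eq_constantCoeff_apply (P : PowerSeries K), Polynomial.coeff_coe,
      Polynomial.coeff_coe] at this
    exact (mul_right_cancel₀ hs ((mul_comm _ _).trans this)).symm
  refine ⟨Polynomial.C (μ.coeff 0)⁻¹ * P, Polynomial.C (μ.coeff 0)⁻¹ * μ, ?_, ?_, ?_⟩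
  · rw [Polynomial.coeff_C_mul, hP0, inv_mul_cancel₀ hμ]
  · rw [Polynomial.coeff_C_mul, inv_mul_cancel₀ hμ]
  · push_cast
    linear_combination PowerSeries.C (μ.coeff 0)⁻¹ * hrel

end Rationality

/-- Let `b ≥ 2` and let `y` be a nonzero Puiseux series over a field
`L` of characteristic zero, written as `y = x^{m/q'} · s(x^{1/q'})` with `s ∈ L[[x]]`,
`s(0) = c ≠ 0`.  Suppose `u := M y / y` is a ramified rational function (i.e.
`M y · B(x^{1/q}) = y · A(x^{1/q})` for some polynomials `A, B` with `B ≠ 0`).  Then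
`g(x) := s(x^b)/s(x)` is a rational function in `L(x)` with `g(0) = 1` (there are
polynomials `A, B` with `A(0) = B(0) = 1` and `s(x^b)·B = A·s`), and
`s(x) = c · ∏_{k≥0} 1/g(x^{b^k})` where the infinite product converges in the `x`-adic
topology of `L[[x]]` (partial products agree with `s/c` coefficientwise up to order
`b^N`). -/
theorem ramified_rational_hypergeometric_structure
    {L : Type*} [Field L] (b : ℕ) (hb : 2 ≤ b)
    (q' : ℕ) (hq' : 0 < q') (m : ℤ) (s : PowerSeries L) (c : L)
    (hc : PowerSeries.constantCoeff (R := L) s = c) (hc0 : c ≠ 0)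
    (y : HahnSeries ℚ L)
    (hy : y = HahnSeries.single ((m : ℚ) / q') 1 * psToHahn L q' hq' s)
    (hrr : ∃ (q : ℕ) (A B : Polynomial L), 0 < q ∧ B ≠ 0 ∧
      mahlerHahn L b (by omega) y * polyToHahn L q B = y * polyToHahn L q A) :
    ∃ A B : Polynomial L, A.coeff 0 = 1 ∧ B.coeff 0 = 1 ∧
      compPow b s * (B : PowerSeries L) = (A : PowerSeries L) * s ∧
      ∀ N : ℕ, ∀ n < b ^ N,
        PowerSeries.coeff (R := L) n
            (s * ∏ k ∈ Finset.range N,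
              compPow (b ^ k) ((A : PowerSeries L) * (B : PowerSeries L)⁻¹)) =
          PowerSeries.coeff (R := L) n (PowerSeries.C (R := L) c) := by
  obtain ⟨q, A₀, B₀, hq, hB₀, hrel⟩ := hrr
  subst hy
  obtain ⟨W, V, hW, hWV⟩ :=
    exists_compPow_relation_of_mahlerHahn_relation (by omega) hq hq' m s hB₀ hrel
  obtain ⟨A, B, hA, hB, hAB⟩ :=
    exists_normalized_relation_of_compPow_relation hq (hc ▸ hc0) hW hWV
  refine ⟨A, B, hA, hB, hAB, fun N n hn => ?_⟩
  rw [mul_prod_compPow_eq (by omega) (by rw [hB]; exact one_ne_zero) hAB, coeff_compPow_of_lt hn,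
    hc]
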